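/- The normalized Canberra distance satisfies the triangle inequality: Δ(U,W) ≤ Δ(U,V) + Δ(V,W) for vectors U, V, W in ℝ^n with strictly positive entries. -/

import Mathlib

/-!
For positive reals, `|a - b| / (a + b) = tanh (|log a - log b| / 2)`, so each coordinate term of `Δ`
is a metric on `(0, ∞)` because `tanh` is increasing and subadditive on `[0, ∞)`. Concretely, for
`a ≤ b ≤ c` the terms `p`, `q`, `r` of the pairs `(a, b)`, `(b, c)`, `(a, c)` obey the `tanh`
addition law `r (1 + p q) = p + q`, whence `r ≤ p + q`; if `b` lies outside `[a, c]`, one of `p`, `q`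
alone dominates `r` by monotonicity. Averaging over the coordinates keeps the triangle inequality.
-/

open Finset

noncomputable def canberraTerm (a b : ℝ) : ℝ := |a - b| / (a + b)

lemma canberraTerm_comm (a b : ℝ) : canberraTerm a b = canberraTerm b a := by
  rw [canberraTerm, canberraTerm, abs_sub_comm, add_comm]

lemma canberraTerm_nonneg {a b : ℝ} (ha : 0 ≤ a) (hb : 0 ≤ b) : 0 ≤ canberraTerm a b :=
  div_nonneg (abs_nonneg _) (add_nonneg ha hb)

section Ordered

variable {a b c : ℝ}

lemma canberraTerm_of_le (hab : a ≤ b) : canberraTerm a b = (b - a) / (a + b) := by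
  rw [canberraTerm, abs_sub_comm, abs_of_nonneg (sub_nonneg.2 hab)]

lemma canberraTerm_le_canberraTerm_right (ha : 0 < a) (hab : a ≤ b) (hbc : b ≤ c) :
    canberraTerm a b ≤ canberraTerm a c := by
  rw [canberraTerm_of_le hab, canberraTerm_of_le (hab.trans hbc),
    div_le_div_iff₀ (by linarith) (by linarith)]
  nlinarith

lemma canberraTerm_le_canberraTerm_left (ha : 0 < a) (hab : a ≤ b) (hbc : b ≤ c) :
    canberraTerm b c ≤ canberraTerm a c := by
  rw [canberraTerm_of_le hbc, canberraTerm_of_le (hab.trans hbc),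
    div_le_div_iff₀ (by linarith) (by linarith)]
  nlinarith

lemma canberraTerm_le_add_of_le_of_le (ha : 0 < a) (hab : a ≤ b) (hbc : b ≤ c) :
    canberraTerm a c ≤ canberraTerm a b + canberraTerm b c := by
  have hb : 0 < b := ha.trans_le hab
  have hc : 0 < c := hb.trans_le hbc
  have addition : canberraTerm a c * (1 + canberraTerm a b * canberraTerm b c) =
      canberraTerm a b + canberraTerm b c := by
    rw [canberraTerm_of_le hab, canberraTerm_of_le hbc, canberraTerm_of_le (hab.trans hbc)]
    field_simp
    ring
  calc canberraTerm a c ≤ canberraTerm a c * (1 + canberraTerm a b * canberraTerm b c) :=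
        le_mul_of_one_le_right (canberraTerm_nonneg ha.le hc.le) <| le_add_of_nonneg_right <|
          mul_nonneg (canberraTerm_nonneg ha.le hb.le) (canberraTerm_nonneg hb.le hc.le)
    _ = canberraTerm a b + canberraTerm b c := addition

end Ordered

lemma canberraTerm_triangle {a b c : ℝ} (ha : 0 < a) (hb : 0 < b) (hc : 0 < c) :
    canberraTerm a c ≤ canberraTerm a b + canberraTerm b c := by
  wlog hac : a ≤ c generalizing a c
  · rw [canberraTerm_comm a c, canberraTerm_comm a b, canberraTerm_comm b c, add_comm]
    exact this hc ha (le_of_not_ge hac)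
  rcases le_total b a with hba | hab
  · calc canberraTerm a c ≤ canberraTerm b c := canberraTerm_le_canberraTerm_left hb hba hac
      _ ≤ canberraTerm a b + canberraTerm b c :=
        le_add_of_nonneg_left (canberraTerm_nonneg ha.le hb.le)
  rcases le_total b c with hbc | hcb
  · exact canberraTerm_le_add_of_le_of_le ha hab hbc
  · calc canberraTerm a c ≤ canberraTerm a b := canberraTerm_le_canberraTerm_right ha hac hcb
      _ ≤ canberraTerm a b + canberraTerm b c :=
        le_add_of_nonneg_right (canberraTerm_nonneg hb.le hc.le)

theorem canberra_triangle (n : ℕ) (U V W : Fin n → ℝ)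
    (hU : ∀ i, 0 < U i) (hV : ∀ i, 0 < V i) (hW : ∀ i, 0 < W i) :
    (1 / (n : ℝ)) * ∑ i, |U i - W i| / (|U i| + |W i|) ≤
      (1 / (n : ℝ)) * ∑ i, |U i - V i| / (|U i| + |V i|) +
        (1 / (n : ℝ)) * ∑ i, |V i - W i| / (|V i| + |W i|) := by
  rw [← mul_add, ← sum_add_distrib]
  gcongr with i
  simpa only [canberraTerm, abs_of_pos (hU i), abs_of_pos (hV i), abs_of_pos (hW i)] using
    canberraTerm_triangle (hU i) (hV i) (hW i)
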